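/- arXiv:0910.1959 — 2 statements merged into one kernel-verified Lean document; each statement's English description precedes it below -/
import Mathlib

section
/- Let (R,V) be an n-extended affine root system of rank l. Then there exists an ℝ-basis {x₁,…,x_{l+n}} of V such that {x₁,…,x_{l+n}} is a ℤ-basis of the free ℤ-module ℤR, {x_{l+1},…,x_{l+n}} is an ℝ-basis of V⁰, and {x_{l+1},…,x_{l+n}} is a ℤ-basis of (ℤR)⁰ := ℤR ∩ V⁰; in particular (ℤR)⁰ is a free ℤ-module of rank n. -/
/- ## Preliminaries: extended affine root systems (Saito) -/

noncomputable section

open Set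

/-- The reflection `s_v : z ↦ z - (v^∨, z) v = z - (2 (v,z)/(v,v)) v` associated to a
bilinear form `B` and a vector `v`.  (When `B v v = 0` this is the identity, by the
`division by zero = 0` convention; reflections are only ever used at non-isotropic `v`.) -/
def srefl {V : Type*} [AddCommGroup V] [Module ℝ V]
    (B : LinearMap.BilinForm ℝ V) (v : V) : Module.End ℝ V :=
  LinearMap.id - (((2 * (B v v)⁻¹) • (B v)).smulRight v)

/-- The Weyl group `W_S` generated by the reflections in the elements of `S`
(realized as the multiplicative closure; each generator is an involution, so this
agrees with the generated group). -/
def weyl {V : Type*} [AddCommGroup V] [Module ℝ V]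
    (B : LinearMap.BilinForm ℝ V) (S : Set V) : Submonoid (Module.End ℝ V) :=
  Submonoid.closure (srefl B '' S)

/-- The orbit `W_S · α`. -/
def worbit {V : Type*} [AddCommGroup V] [Module ℝ V]
    (B : LinearMap.BilinForm ℝ V) (S : Set V) (α : V) : Set V :=
  {v | ∃ w ∈ weyl B S, w α = v}

/-- `V⁰`, the set of isotropic vectors. -/
def nullSet {V : Type*} [AddCommGroup V] [Module ℝ V]
    (B : LinearMap.BilinForm ℝ V) : Set V := {v | B v v = 0}

/-- `ℤR`, the subgroup of `V` generated by `R`. -/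
def zspan {V : Type*} [AddCommGroup V] (R : Set V) : AddSubgroup V :=
  AddSubgroup.closure R

/-- `ℤ≥0 Π`, the set of nonnegative-integer linear combinations of elements of `Π`. -/
def nnspan {V : Type*} [AddCommMonoid V] (P : Set V) : Set V :=
  (AddSubmonoid.closure P : Set V)

/-- `(R, V)` is an `n`-extended affine root system of rank `l` (K. Saito). -/
structure IsEARS {V : Type*} [AddCommGroup V] [Module ℝ V]
    (B : LinearMap.BilinForm ℝ V) (R : Set V) (l n : ℕ) : Prop where
  rank_pos : 1 ≤ l
  findim : FiniteDimensional ℝ V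
  symm : ∀ u v, B u v = B v u
  posSemidef : ∀ v, 0 ≤ B v v
  dim_eq : Module.finrank ℝ V = l + n
  null_eq : nullSet B = (LinearMap.ker B : Set V)
  dim_null : Module.finrank ℝ (LinearMap.ker B) = n
  /-- (AX1), first half -/
  root_nonisotropic : ∀ α ∈ R, B α α ≠ 0
  /-- (AX1), second half -/
  span_eq_top : Submodule.span ℝ R = ⊤
  /-- (AX2) -/
  free : Module.Free ℤ (zspan R)
  /-- (AX2) -/
  rank_eq : Module.finrank ℤ (zspan R) = l + n
  /-- (AX3): `(α^∨, β) ∈ ℤ` -/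
  integral : ∀ α ∈ R, ∀ β ∈ R, ∃ m : ℤ, 2 * B α β = (m : ℝ) * B α α
  /-- (AX4) -/
  reflect : ∀ α ∈ R, srefl B α '' R = R
  /-- (AX5) -/
  connected : ∀ S' ⊆ R, S'.Nonempty → S' ≠ R → ∃ x ∈ S', ∃ y ∈ R \ S', B x y ≠ 0

/-- `R` is reduced, i.e. `R ∩ 2R = ∅`. -/
def IsReducedRS {V : Type*} [AddCommGroup V] [Module ℝ V] (R : Set V) : Prop :=
  ∀ α ∈ R, (2 : ℤ) • α ∉ R

/-- `Π₀` is a base (with `m` elements) of the root system `R₀`: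
`Π₀ ⊆ R₀`, `Π₀` consists of `m` linearly independent elements, and
`R₀ = (R₀ ∩ ℤ≥0 Π₀) ∪ (R₀ ∩ ℤ≤0 Π₀)`. -/
def IsBaseSet {M : Type*} [AddCommGroup M] [Module ℝ M] (R₀ P₀ : Set M) (m : ℕ) : Prop :=
  P₀ ⊆ R₀ ∧ P₀.Finite ∧ P₀.ncard = m ∧
  LinearIndependent ℝ ((↑) : P₀ → M) ∧
  R₀ = (R₀ ∩ nnspan P₀) ∪ (R₀ ∩ (-(nnspan P₀)))

/-- The bilinear form induced on a quotient `V ⧸ W` by a form vanishing on `W`. -/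
def quotForm {V : Type*} [AddCommGroup V] [Module ℝ V]
    (W : Submodule ℝ V) (B : LinearMap.BilinForm ℝ V)
    (h1 : ∀ w ∈ W, B w = 0) (h2 : ∀ v : V, ∀ w ∈ W, B v w = 0) :
    LinearMap.BilinForm ℝ (V ⧸ W) :=
  Submodule.liftQ W
    { toFun := fun v => Submodule.liftQ W (B v) (fun w hw => LinearMap.mem_ker.mpr (h2 v w hw))
      map_add' := fun u v => by
        ext x
        simp
      map_smul' := fun c v => by
        ext x
        simp }
    (fun w hw => by
      simp only [LinearMap.mem_ker]
      ext x
      simp [h1 w hw])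

end

/-!
For roots `α₁, …, α_l` whose functionals `(αᵢ, ·)` form a basis of the image of `V → V*`, the
coroot pairings `v ↦ (αᵢ^∨, v)` are integral on `ℤR` by (AX3), so they form a ℤ-linear map
`φ : ℤR → ℤˡ` whose kernel is `(ℤR)⁰`. The image of `φ` is free, so `ℤR ≅ ker φ ⊕ im φ` and `ℤR`
has a basis consisting of a basis of `(ℤR)⁰` and at most `l` further vectors. These `l + n`
vectors span `V`, hence form an ℝ-basis; the ones in `(ℤR)⁰` are then ℝ-independent in `V⁰`, so
there are at most `n` of them, and both counts are exact.
-/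

open Module Set

theorem LinearMap.exists_basis_sum_span_inr_eq_ker {R M N : Type*} [CommRing R] [IsDomain R]
    [IsPrincipalIdealRing R] [AddCommGroup M] [Module R M] [Module.Free R M] [Module.Finite R M]
    [AddCommGroup N] [Module R N] [Module.Free R N] [Module.Finite R N] (φ : M →ₗ[R] N) :
    ∃ (p q : ℕ) (b : Basis (Fin p ⊕ Fin q) R M), p ≤ finrank R N ∧
      Submodule.span R (Set.range (b ∘ Sum.inr)) = LinearMap.ker φ := by
  obtain ⟨p, bRange⟩ := (LinearMap.range φ).basisOfPid (Free.chooseBasis R N)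
  obtain ⟨q, bKer⟩ := (LinearMap.ker φ).basisOfPid (Free.chooseBasis R M)
  have : Free R (LinearMap.range φ) := .of_basis bRange
  obtain ⟨s, hs⟩ := φ.rangeRestrict.exists_rightInverse_of_surjective φ.range_rangeRestrict
  have hexact : Function.Exact (LinearMap.ker φ).subtype φ.rangeRestrict := by
    rw [LinearMap.exact_iff, LinearMap.ker_rangeRestrict, Submodule.range_subtype]
  obtain ⟨e, he, -⟩ := hexact.splitSurjectiveEquiv (Submodule.subtype_injective _) ⟨s, hs⟩
  let b := ((bKer.prod bRange).reindex (Equiv.sumComm _ _)).map e.symm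
  have hb : b ∘ Sum.inr = (LinearMap.ker φ).subtype ∘ bKer := by
    ext k
    simp [b, he]
  refine ⟨p, q, b, ?_, ?_⟩
  · simpa [finrank_eq_card_basis bRange] using (LinearMap.range φ).finrank_le
  · rw [hb, Set.range_comp, ← Submodule.map_span, bKer.span_eq, Submodule.map_top,
      Submodule.range_subtype]

theorem AddSubgroup.closure_range_coe_comp {V ι : Type*} [AddCommGroup V] (Λ : AddSubgroup V)
    (w : ι → Λ) :
    AddSubgroup.closure (range fun i => (w i : V)) =
      (Submodule.span ℤ (range w)).toAddSubgroup.map Λ.subtype := by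
  rw [Submodule.span_int_eq_addSubgroupClosure, AddMonoidHom.map_closure, ← range_comp]
  rfl

theorem AddSubgroup.free_and_finrank_of_closure_eq {V ι : Type*} [AddCommGroup V] [Fintype ι]
    {z : ι → V} (hz : LinearIndependent ℤ z) {H : AddSubgroup V}
    (hH : AddSubgroup.closure (range z) = H) : Free ℤ H ∧ finrank ℤ H = Fintype.card ι := by
  subst hH
  rw [← Submodule.span_int_eq_addSubgroupClosure]
  exact ⟨.of_basis (Basis.span hz), finrank_eq_card_basis (Basis.span hz)⟩

theorem AddSubgroup.exists_adapted_basis_of_intLinearMap {V N : Type*} [AddCommGroup V]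
    [Module ℝ V] [FiniteDimensional ℝ V] [AddCommGroup N] [Free ℤ N] [Module.Finite ℤ N] {l n : ℕ}
    (hV : finrank ℝ V = l + n) (K : Submodule ℝ V) (hK : finrank ℝ K = n) (Λ : AddSubgroup V)
    (hΛ : Submodule.span ℝ (Λ : Set V) = ⊤) [Free ℤ Λ] [Module.Finite ℤ Λ]
    (hΛrank : finrank ℤ Λ = l + n) (φ : Λ →ₗ[ℤ] N) (hN : finrank ℤ N ≤ l)
    (hφ : ∀ a, φ a = 0 ↔ (a : V) ∈ K) :
    ∃ x : Fin (l + n) → V, LinearIndependent ℝ x ∧ Submodule.span ℝ (range x) = ⊤ ∧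
      AddSubgroup.closure (range x) = Λ ∧
      Submodule.span ℝ (range (x ∘ Fin.natAdd l)) = K ∧
      AddSubgroup.closure (range (x ∘ Fin.natAdd l)) = Λ ⊓ K.toAddSubgroup := by
  obtain ⟨p, q, b, hp, hker⟩ := φ.exists_basis_sum_span_inr_eq_ker
  set v : Fin p ⊕ Fin q → V := fun i => (b i : V)
  have hpq : p + q = l + n := by simpa using (finrank_eq_card_basis b).symm.trans hΛrank
  have hclosure : AddSubgroup.closure (range v) = Λ := by
    rw [Λ.closure_range_coe_comp, b.span_eq, Submodule.top_toAddSubgroup,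
      ← AddMonoidHom.range_eq_map, AddSubgroup.range_subtype]
  have hspan : Submodule.span ℝ (range v) = ⊤ := by
    refine eq_top_iff.mpr (hΛ ▸ Submodule.span_le.mpr ?_)
    rw [← hclosure]
    exact AddSubgroup.closure_le (Submodule.span ℝ (range v)).toAddSubgroup |>.mpr
      Submodule.subset_span
  have hli : LinearIndependent ℝ v :=
    linearIndependent_of_top_le_span_of_card_eq_finrank hspan.ge (by simp [hV, hpq])
  have hliK : LinearIndependent ℝ (v ∘ Sum.inr) := hli.comp _ Sum.inr_injective
  have hspanK : Submodule.span ℝ (range (v ∘ Sum.inr)) ≤ K := by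
    rw [Submodule.span_le]
    rintro _ ⟨k, rfl⟩
    exact (hφ _).1 (LinearMap.mem_ker.mp (hker ▸ Submodule.subset_span ⟨k, rfl⟩))
  have hq : q ≤ n := by
    simpa [finrank_span_eq_card hliK, hK] using Submodule.finrank_mono hspanK
  obtain rfl : l = p := by omega
  obtain rfl : n = q := by omega
  have hnatAdd : (v ∘ finSumFinEquiv.symm) ∘ Fin.natAdd l = v ∘ Sum.inr := by
    ext k
    simp
  refine ⟨v ∘ finSumFinEquiv.symm, hli.comp _ (Equiv.injective _), ?_, ?_, ?_, ?_⟩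
  · rwa [range_comp, Equiv.range_eq_univ, image_univ]
  · rwa [range_comp, Equiv.range_eq_univ, image_univ]
  · rw [hnatAdd]
    exact Submodule.eq_of_le_of_finrank_eq hspanK (by rw [finrank_span_eq_card hliK, hK]; simp)
  · rw [hnatAdd]
    refine (Λ.closure_range_coe_comp (b ∘ Sum.inr)).trans ?_
    ext x
    simp [hker, hφ, and_comm]

theorem AddMonoidHom.exists_int_lift {M ι : Type*} [AddCommGroup M] (f : M →+ ι → ℝ)
    (hf : ∀ m i, ∃ z : ℤ, f m i = z) : ∃ g : M →+ ι → ℤ, ∀ m i, (g m i : ℝ) = f m i := by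
  choose g hg using hf
  refine ⟨{ toFun := g, map_zero' := ?_, map_add' := fun m m' => ?_ }, fun m i => (hg m i).symm⟩
  · ext i
    apply Int.cast_injective (α := ℝ)
    simp [← hg]
  · ext i
    apply Int.cast_injective (α := ℝ)
    simp [← hg]

theorem LinearMap.BilinForm.exists_finset_forall_apply_eq_zero_iff {K V : Type*} [Field K]
    [AddCommGroup V] [Module K V] [FiniteDimensional K V] {B : LinearMap.BilinForm K V}
    (hB : ∀ u v, B u v = B v u) {S : Set V} (hS : Submodule.span K S = ⊤) :
    ∃ s : Finset V, ↑s ⊆ S ∧ s.card = finrank K (LinearMap.range B) ∧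
      ∀ v, (∀ α ∈ s, B α v = 0) ↔ v ∈ LinearMap.ker B := by
  classical
  obtain ⟨κ, a, ha, hspan, hli⟩ := exists_linearIndependent' K (fun β : S => B β)
  have : Fintype κ := @Fintype.ofFinite _ hli.finite
  have hrange : Submodule.span K (Set.range fun β : S => B β) = LinearMap.range B := by
    rw [← image_eq_range, ← Submodule.map_span, hS, Submodule.map_top]
  refine ⟨Finset.univ.image (Subtype.val ∘ a), by simp [range_subset_iff], ?_, fun v => ?_⟩
  · rw [Finset.card_image_of_injective _ (Subtype.val_injective.comp ha), Finset.card_univ,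
      ← finrank_span_eq_card hli, hspan, hrange]
  · simp only [Finset.mem_image, Finset.mem_univ, true_and, forall_exists_index,
      forall_apply_eq_imp_iff, LinearMap.mem_ker]
    refine ⟨fun h => ?_, fun h k => by rw [hB, h, LinearMap.zero_apply]⟩
    have hle : LinearMap.range B ≤ LinearMap.ker (Dual.eval K V v) := by
      rw [← hrange, ← hspan, Submodule.span_le]
      rintro _ ⟨k, rfl⟩
      exact h k
    ext u
    rw [hB]
    exact hle (LinearMap.mem_range_self B u)

namespace IsEARS

variable {V : Type*} [AddCommGroup V] [Module ℝ V] {B : LinearMap.BilinForm ℝ V} {R : Set V}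
  {l n : ℕ}

theorem span_zspan_eq_top (hE : IsEARS B R l n) : Submodule.span ℝ (zspan R : Set V) = ⊤ :=
  top_le_iff.mp (hE.span_eq_top ▸ Submodule.span_mono AddSubgroup.subset_closure)

theorem exists_coroot_pairing_eq_intCast (hE : IsEARS B R l n) {α : V} (hα : α ∈ R) {v : V}
    (hv : v ∈ zspan R) : ∃ m : ℤ, 2 * B α v / B α α = m := by
  have hαα := hE.root_nonisotropic α hα
  induction hv using AddSubgroup.closure_induction with
  | mem β hβ =>
    obtain ⟨m, hm⟩ := hE.integral α hα β hβ
    exact ⟨m, by rw [hm, mul_div_cancel_right₀ _ hαα]⟩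
  | zero => exact ⟨0, by simp⟩
  | add v w _ _ hv hw =>
    obtain ⟨m, hm⟩ := hv
    obtain ⟨m', hm'⟩ := hw
    exact ⟨m + m', by rw [map_add, mul_add, add_div, hm, hm', Int.cast_add]⟩
  | neg v _ hv =>
    obtain ⟨m, hm⟩ := hv
    exact ⟨-m, by rw [map_neg, mul_neg, neg_div, hm, Int.cast_neg]⟩

theorem exists_intLinearMap_ker_eq (hE : IsEARS B R l n) :
    ∃ (s : Finset V) (φ : zspan R →ₗ[ℤ] (s → ℤ)), s.card = l ∧
      ∀ a, φ a = 0 ↔ (a : V) ∈ LinearMap.ker B := by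
  have := hE.findim
  obtain ⟨s, hsR, hcard, hker⟩ :=
    LinearMap.BilinForm.exists_finset_forall_apply_eq_zero_iff hE.symm hE.span_eq_top
  let ψ : V →ₗ[ℝ] s → ℝ := LinearMap.pi fun α => (2 / B α α) • B α
  obtain ⟨g, hg⟩ := (ψ.toAddMonoidHom.comp (zspan R).subtype).exists_int_lift fun a α => by
    simpa [ψ, mul_div_right_comm] using hE.exists_coroot_pairing_eq_intCast (hsR α.2) a.2
  refine ⟨s, g.toIntLinearMap, ?_, fun a => ?_⟩
  · have := LinearMap.finrank_range_add_finrank_ker B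
    rw [hE.dim_eq, hE.dim_null] at this
    omega
  · have hgα : ∀ α : s, g a α = 0 ↔ B α a = 0 := fun α => by
      rw [← Int.cast_eq_zero (α := ℝ), hg]
      simp [ψ, hE.root_nonisotropic _ (hsR α.2)]
    simp only [AddMonoidHom.coe_toIntLinearMap, funext_iff, Pi.zero_apply, hgα, Subtype.forall]
    exact hker a

end IsEARS

/-- An `n`-extended affine root system of rank `l` admits an ℝ-basis
`x₁, …, x_{l+n}` of `V` which is simultaneously a ℤ-basis of `ℤR`, whose last `n` members
form an ℝ-basis of `V⁰` and a ℤ-basis of `(ℤR)⁰ = ℤR ∩ V⁰`; in particular `(ℤR)⁰` is a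
free ℤ-module of rank `n`. -/
theorem stmt0 {V : Type*} [AddCommGroup V] [Module ℝ V]
    (B : LinearMap.BilinForm ℝ V) (R : Set V) (l n : ℕ)
    (hE : IsEARS B R l n) :
    (∃ x : Fin (l + n) → V,
      -- `x` is an ℝ-basis of `V`
      LinearIndependent ℝ x ∧ Submodule.span ℝ (Set.range x) = ⊤ ∧
      -- `x` is a ℤ-basis of `ℤR`
      AddSubgroup.closure (Set.range x) = zspan R ∧
      -- the last `n` of the `xᵢ` form an ℝ-basis of `V⁰`
      (Submodule.span ℝ (x '' {i : Fin (l + n) | l ≤ (i : ℕ)}) : Set V) = nullSet B ∧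
      -- the last `n` of the `xᵢ` form a ℤ-basis of `(ℤR)⁰ = ℤR ∩ V⁰`
      (AddSubgroup.closure (x '' {i : Fin (l + n) | l ≤ (i : ℕ)}) : Set V)
        = (zspan R : Set V) ∩ nullSet B) ∧
    -- in particular, `(ℤR)⁰` is a free ℤ-module of rank `n`
    Module.Free ℤ ↥(zspan R ⊓ (LinearMap.ker B).toAddSubgroup) ∧
    Module.finrank ℤ ↥(zspan R ⊓ (LinearMap.ker B).toAddSubgroup) = n := by
  have := hE.findim
  have := hE.free
  have : Module.Finite ℤ (zspan R) :=
    Module.finite_of_finrank_pos (by rw [hE.rank_eq]; have := hE.rank_pos; omega)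
  obtain ⟨s, φ, hs, hφ⟩ := hE.exists_intLinearMap_ker_eq
  obtain ⟨x, hli, hspan, hclosure, hspanK, hclosureK⟩ :=
    AddSubgroup.exists_adapted_basis_of_intLinearMap hE.dim_eq (LinearMap.ker B) hE.dim_null
      (zspan R) hE.span_zspan_eq_top hE.rank_eq φ (by simp [hs]) hφ
  have himage : x '' {i : Fin (l + n) | l ≤ (i : ℕ)} = range (x ∘ Fin.natAdd l) := by
    rw [range_comp, Fin.range_natAdd]
  obtain ⟨hfree, hrank⟩ := AddSubgroup.free_and_finrank_of_closure_eq
    ((hli.comp _ (Fin.natAdd_injective _ _)).restrict_scalars' ℤ) hclosureK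
  refine ⟨⟨x, hli, hspan, hclosure, ?_, ?_⟩, hfree, by simpa using hrank⟩
  · rw [himage, hspanK, hE.null_eq]
  · rw [himage, hclosureK, hE.null_eq]
    rfl
end

section
/- Let R be an affine root system (n = 1) of rank l in V, δ′ ∈ V⁰ ∖ {0} with ℤδ′ = (ℤR)⁰ := ℤR ∩ V⁰, and Π′ ⊆ R with |Π′| = l such that π(Π′) is a base of π(R). Then the unique α₀ ∈ R for which Π′ ∪ {α₀} is a base of R and α₀ ∈ ℕδ′ + ℤΠ′ satisfies α₀ = δ′ − θ, where θ is a nonzero nonnegative-integer linear combination of elements of Π′ and π(θ) ∈ Θ(π(R), π(Π′)). -/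
/-- `Θ(R₀, Π₀)`: the set of highest elements `α₊` of Weyl-orbits of `R₀`,
where `α₊` is characterized by `W_{R₀}·α ⊆ α₊ + ℤ≤0 Π₀`. -/
def thetaSet {M : Type*} [AddCommGroup M] [Module ℝ M]
    (B' : LinearMap.BilinForm ℝ M) (R₀ P₀ : Set M) : Set M :=
  {γ | ∃ α ∈ R₀, γ ∈ worbit B' R₀ α ∧
    ∀ β ∈ worbit B' R₀ α, ∃ y ∈ nnspan P₀, β = γ - y}

open Set Submodule

section Reflections

variable {M : Type*} [AddCommGroup M] [Module ℝ M] (B : LinearMap.BilinForm ℝ M)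

theorem srefl_apply (v z : M) : srefl B v z = z - (2 * (B v v)⁻¹ * B v z) • v := by
  simp [srefl]

theorem srefl_apply_of_orthogonal {v z : M} (h : B v z = 0) : srefl B v z = z := by
  simp [srefl_apply, h]

theorem srefl_apply_self {v : M} (h : B v v ≠ 0) : srefl B v v = -v := by
  rw [srefl_apply, mul_assoc, inv_mul_cancel₀ h, mul_one, two_smul]
  abel

theorem srefl_apply_of_integral {p u : M} {k : ℤ} (hp : B p p ≠ 0) (hk : 2 * B p u = k * B p p) :
    srefl B p u = u - (k : ℝ) • p := by
  have hcoef : 2 * (B p p)⁻¹ * B p u = k := by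
    field_simp
    linarith
  rw [srefl_apply, hcoef]

theorem srefl_srefl_apply (v z : M) : srefl B v (srefl B v z) = z := by
  by_cases h : B v v = 0
  · simp [srefl_apply, h]
  · have hcoef : 2 * (B v v)⁻¹ * B v (srefl B v z) = -(2 * (B v v)⁻¹ * B v z) := by
      rw [srefl_apply, map_sub, map_smul, smul_eq_mul]
      field_simp
      ring
    rw [srefl_apply B v (srefl B v z), hcoef, neg_smul, sub_neg_eq_add, srefl_apply,
      sub_add_cancel]

theorem srefl_smul {c : ℝ} (hc : c ≠ 0) (v : M) : srefl B (c • v) = srefl B v := by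
  ext z
  simp only [srefl_apply, map_smul, LinearMap.smul_apply, smul_eq_mul, smul_smul]
  by_cases h : B v v = 0
  · simp [h]
  · congr 1
    field_simp

theorem srefl_mapsTo_span {S : Set M} {v : M} (hv : v ∈ S) :
    MapsTo (srefl B v) (span ℝ S) (span ℝ S) := fun z hz => by
  rw [SetLike.mem_coe, srefl_apply]
  exact sub_mem hz (smul_mem _ _ (subset_span hv))

variable {B} in
theorem form_srefl_left (hsymm : ∀ a b, B a b = B b a) (v a b : M) :
    B (srefl B v a) b = B a (srefl B v b) := by
  simp only [srefl_apply, map_sub, map_smul, LinearMap.sub_apply, LinearMap.smul_apply,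
    smul_eq_mul]
  rw [hsymm a v]
  ring

theorem srefl_srefl (hsymm : ∀ a b, B a b = B b a) (v y : M) :
    srefl B (srefl B v y) = srefl B v * srefl B y * srefl B v := by
  ext z
  have hyy : B (srefl B v y) (srefl B v y) = B y y := by
    rw [form_srefl_left hsymm, srefl_srefl_apply]
  rw [Module.End.mul_apply, Module.End.mul_apply, srefl_apply B (srefl B v y), hyy,
    form_srefl_left hsymm, srefl_apply B y, map_sub, map_smul, srefl_srefl_apply]

theorem weyl_mapsTo {S T : Set M} (hS : ∀ v ∈ S, MapsTo (srefl B v) T T) {w : Module.End ℝ M}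
    (hw : w ∈ weyl B S) : MapsTo w T T := by
  induction hw using Submonoid.closure_induction with
  | mem w hw =>
    obtain ⟨v, hv, rfl⟩ := hw
    exact hS v hv
  | one => exact mapsTo_id T
  | mul a b _ _ ha hb => exact ha.comp hb

end Reflections

section Cones

theorem nnspan_subset_closure {M : Type*} [AddCommGroup M] (P : Set M) :
    nnspan P ⊆ AddSubgroup.closure P :=
  AddSubmonoid.closure_le.2 (AddSubgroup.subset_closure (G := M))

theorem mem_nnspan_insert {M : Type*} [AddCommMonoid M] {a x : M} {P : Set M}
    (hx : x ∈ nnspan (insert a P)) :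
    ∃ n : ℕ, ∃ c ∈ nnspan P, x = n • a + c := by
  rw [nnspan, insert_eq, AddSubmonoid.closure_union, SetLike.mem_coe, AddSubmonoid.mem_sup]
    at hx
  obtain ⟨_, hy, c, hc, rfl⟩ := hx
  obtain ⟨n, rfl⟩ := AddSubmonoid.mem_closure_singleton.1 hy
  exact ⟨n, c, hc, rfl⟩

variable {M N : Type*} [AddCommGroup M] [Module ℝ M] [AddCommGroup N] [Module ℝ N]

theorem nnspan_image (g : M →ₗ[ℝ] N) (P : Set M) : nnspan (g '' P) = g '' nnspan P := by
  rw [nnspan, nnspan, ← AddMonoidHom.map_mclosure, AddSubmonoid.coe_map]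

theorem nonneg_of_mem_nnspan (f : M →ₗ[ℝ] ℝ) {P : Set M} (hf : ∀ p ∈ P, 0 ≤ f p) {x : M}
    (hx : x ∈ nnspan P) : 0 ≤ f x := by
  induction hx using AddSubmonoid.closure_induction with
  | mem p hp => exact hf p hp
  | zero => simp
  | add a b _ _ ha hb => rw [map_add]; positivity

theorem pos_of_mem_nnspan (f : M →ₗ[ℝ] ℝ) {P : Set M} (hf : ∀ p ∈ P, 0 < f p) {x : M}
    (hx : x ∈ nnspan P) (hx0 : x ≠ 0) : 0 < f x := by
  have key : x = 0 ∨ 0 < f x := by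
    clear hx0
    induction hx using AddSubmonoid.closure_induction with
    | mem p hp => exact .inr (hf p hp)
    | zero => exact .inl rfl
    | add a b _ _ ha hb =>
      rcases ha with rfl | ha
      · rwa [zero_add]
      · rcases hb with rfl | hb
        · rw [add_zero]
          exact .inr ha
        · exact .inr (by rw [map_add]; positivity)
  exact key.resolve_left hx0

theorem exists_int_eq_of_mem_closure (f : M →ₗ[ℝ] ℝ) {P : Set M} (hf : ∀ p ∈ P, ∃ k : ℤ, f p = k)
    {x : M} (hx : x ∈ AddSubgroup.closure P) : ∃ k : ℤ, f x = k := by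
  induction hx using AddSubgroup.closure_induction with
  | mem p hp => exact hf p hp
  | zero => exact ⟨0, by simp⟩
  | add a b _ _ ha hb =>
    obtain ⟨k, hk⟩ := ha
    obtain ⟨k', hk'⟩ := hb
    exact ⟨k + k', by rw [map_add, hk, hk']; push_cast; ring⟩
  | neg a _ ha =>
    obtain ⟨k, hk⟩ := ha
    exact ⟨-k, by rw [map_neg, hk]; push_cast; ring⟩

theorem exists_linearMap_eqOn {s : Set M} (hs : LinearIndepOn ℝ id s) (g : M → ℝ) :
    ∃ f : M →ₗ[ℝ] ℝ, ∀ x ∈ s, f x = g x := by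
  let b := Module.Basis.extend hs
  refine ⟨b.constr ℝ fun i => g i, fun x hx => ?_⟩
  have := b.constr_basis ℝ (fun i => g i) ⟨x, hs.subset_extend _ hx⟩
  rwa [Module.Basis.extend_apply_self] at this

theorem apply_eq_zero_of_mem_span {f : M →ₗ[ℝ] ℝ} {P : Set M} (hf : ∀ p ∈ P, f p = 0) {x : M}
    (hx : x ∈ span ℝ P) : f x = 0 :=
  LinearMap.eqOn_span (g := 0) hf hx

theorem exists_coord {s : Set M} (hs : LinearIndepOn ℝ id s) {a : M} (ha : a ∈ s) :
    ∃ f : M →ₗ[ℝ] ℝ, f a = 1 ∧ ∀ x ∈ s, x ≠ a → f x = 0 := by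
  classical
  obtain ⟨f, hf⟩ := exists_linearMap_eqOn hs fun x => if x = a then 1 else 0
  exact ⟨f, by simp [hf a ha], fun x hx hxa => by simp [hf x hx, hxa]⟩

end Cones

namespace IsBaseSet

variable {M : Type*} [AddCommGroup M] [Module ℝ M] {R₀ P₀ : Set M} {m : ℕ}

theorem mem_or_neg_mem (hP : IsBaseSet R₀ P₀ m) {x : M} (hx : x ∈ R₀) :
    x ∈ nnspan P₀ ∨ -x ∈ nnspan P₀ := by
  rw [hP.2.2.2.2] at hx
  exact hx.imp And.right And.right

theorem mem_nnspan_of_pos (hP : IsBaseSet R₀ P₀ m) {f : M →ₗ[ℝ] ℝ} (hf : ∀ p ∈ P₀, 0 ≤ f p)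
    {x : M} (hx : x ∈ R₀) (hfx : 0 < f x) : x ∈ nnspan P₀ :=
  (hP.mem_or_neg_mem hx).resolve_right fun hneg => by
    have := nonneg_of_mem_nnspan f hf hneg
    rw [map_neg] at this
    linarith

theorem zspan_le (hP : IsBaseSet R₀ P₀ m) : zspan R₀ ≤ AddSubgroup.closure P₀ :=
  (AddSubgroup.closure_le _).2 fun x hx => by
    rcases hP.mem_or_neg_mem hx with h | h
    · exact nnspan_subset_closure P₀ h
    · simpa using neg_mem (nnspan_subset_closure P₀ h)

theorem exists_nnspan_apply_eq {N : Type*} [AddCommGroup N] [Module ℝ N] {R P : Set M} {l : ℕ}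
    (g : M →ₗ[ℝ] N) (hP : IsBaseSet (g '' R) (g '' P) l) {x : M} (hx : x ∈ R) :
    ∃ c ∈ nnspan P, g x = g c ∨ g x = g (-c) := by
  rcases hP.mem_or_neg_mem (mem_image_of_mem g hx) with h | h <;>
    rw [nnspan_image] at h <;> obtain ⟨c, hc, hcx⟩ := h
  · exact ⟨c, hc, .inl hcx.symm⟩
  · exact ⟨c, hc, .inr (by rw [map_neg, hcx, neg_neg])⟩

end IsBaseSet

structure IsRootSet {M : Type*} [AddCommGroup M] [Module ℝ M]
    (B : LinearMap.BilinForm ℝ M) (R₀ : Set M) : Prop where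
  symm : ∀ u v, B u v = B v u
  pos : ∀ α ∈ R₀, 0 < B α α
  integral : ∀ α ∈ R₀, ∀ β ∈ R₀, ∃ m : ℤ, 2 * B α β = m * B α α
  reflect : ∀ α ∈ R₀, srefl B α '' R₀ = R₀

theorem IsEARS.isRootSet {V : Type*} [AddCommGroup V] [Module ℝ V]
    {B : LinearMap.BilinForm ℝ V} {R : Set V} {l n : ℕ} (hE : IsEARS B R l n) :
    IsRootSet B R where
  symm := hE.symm
  pos α hα := (hE.posSemidef α).lt_of_ne' (hE.root_nonisotropic α hα)
  integral := hE.integral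
  reflect := hE.reflect

namespace IsRootSet

variable {M : Type*} [AddCommGroup M] [Module ℝ M] {B : LinearMap.BilinForm ℝ M} {R₀ P₀ : Set M}
  {m : ℕ}

theorem mapsTo_srefl (hR : IsRootSet B R₀) {α : M} (hα : α ∈ R₀) :
    MapsTo (srefl B α) R₀ R₀ :=
  (mapsTo_image _ _).mono_right (hR.reflect α hα).subset

theorem neg_mem (hR : IsRootSet B R₀) {α : M} (hα : α ∈ R₀) : -α ∈ R₀ := by
  simpa [srefl_apply_self B (hR.pos α hα).ne'] using hR.mapsTo_srefl hα hα

theorem form_nonpos_of_isBaseSet (hR : IsRootSet B R₀) (hP : IsBaseSet R₀ P₀ m)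
    {α p : M} (hα : α ∈ P₀) (hp : p ∈ P₀) (hne : α ≠ p) : B p α ≤ 0 := by
  by_contra! hpos
  obtain ⟨fα, hfαα, hfα⟩ := exists_coord hP.2.2.2.1 hα
  obtain ⟨fp, hfpp, hfp⟩ := exists_coord hP.2.2.2.1 hp
  have hfα_nonneg : ∀ q ∈ P₀, 0 ≤ fα q := fun q hq => by
    rcases eq_or_ne q α with rfl | hqα <;> simp [*]
  have hfp_nonneg : ∀ q ∈ P₀, 0 ≤ fp q := fun q hq => by
    rcases eq_or_ne q p with rfl | hqp <;> simp [*]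
  have hs : srefl B p α ∈ nnspan P₀ := by
    refine hP.mem_nnspan_of_pos hfα_nonneg (hR.mapsTo_srefl (hP.1 hp) (hP.1 hα)) ?_
    simp [srefl_apply, hfαα, hfα p hp hne.symm]
  have hle := nonneg_of_mem_nnspan fp hfp_nonneg hs
  simp only [srefl_apply, map_sub, map_smul, hfp α hα hne, hfpp, smul_eq_mul, mul_one,
    zero_sub, neg_nonneg] at hle
  have hpp := hR.pos p (hP.1 hp)
  have hcoef : 0 < 2 * (B p p)⁻¹ * B p α := by positivity
  linarith

theorem exists_srefl_height_lt (hR : IsRootSet B R₀) (hP : IsBaseSet R₀ P₀ m)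
    {ht : M →ₗ[ℝ] ℝ} (hht : ∀ p ∈ P₀, ht p = 1) {u : M} (hu : u ∈ R₀) (hu' : u ∈ nnspan P₀) :
    ∃ p ∈ P₀, (∃ c : ℝ, c ≠ 0 ∧ u = c • p) ∨
      (srefl B p u ∈ nnspan P₀ ∧ ht (srefl B p u) ≤ ht u - 1) := by
  classical
  obtain ⟨p, hp, hup⟩ : ∃ p ∈ P₀, 0 < B u p := by
    by_contra! H
    have hle := nonneg_of_mem_nnspan (-B u) (fun p hp => by simpa using H p hp) hu'
    rw [LinearMap.neg_apply, neg_nonneg] at hle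
    exact (hR.pos u hu).not_ge hle
  obtain ⟨k, hk⟩ := hR.integral p (hP.1 hp) u hu
  have hk1 : (1 : ℝ) ≤ k := by
    have hpp := hR.pos p (hP.1 hp)
    have : (0 : ℝ) < k := by nlinarith [hR.symm u p]
    exact_mod_cast (show (0 : ℤ) < k by exact_mod_cast this)
  have hs : srefl B p u = u - (k : ℝ) • p :=
    srefl_apply_of_integral B (hR.pos p (hP.1 hp)).ne' hk
  refine ⟨p, hp, ?_⟩
  obtain ⟨a, u', hu'', rfl⟩ := mem_nnspan_insert (a := p) (P := P₀ \ {p})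
    (by rwa [insert_sdiff_singleton, insert_eq_of_mem hp])
  by_cases h0 : u' = 0
  · refine .inl ⟨a, fun ha => ?_, by simp [h0, Nat.cast_smul_eq_nsmul]⟩
    simpa [ha, h0] using hR.pos _ hu
  · right
    obtain ⟨g, hg⟩ := exists_linearMap_eqOn hP.2.2.2.1 fun q => if q = p then 0 else 1
    have hgu' : 0 < g u' :=
      pos_of_mem_nnspan g (fun q hq => by simp [hg q hq.1, show q ≠ p from hq.2]) hu'' h0
    refine ⟨hP.mem_nnspan_of_pos (f := g) (fun q hq => ?_) (hR.mapsTo_srefl (hP.1 hp) hu) ?_, ?_⟩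
    · rw [hg q hq]; split_ifs <;> norm_num
    · simpa [hs, hg p hp] using hgu'
    · rw [hs, map_sub, map_smul, hht p hp, smul_eq_mul, mul_one]
      linarith

theorem srefl_mem_weyl_of_isBaseSet (hR : IsRootSet B R₀) (hP : IsBaseSet R₀ P₀ m)
    {u : M} (hu : u ∈ R₀) : srefl B u ∈ weyl B P₀ := by
  have hgen : ∀ p ∈ P₀, srefl B p ∈ weyl B P₀ := fun p hp =>
    Submonoid.subset_closure (mem_image_of_mem _ hp)
  obtain ⟨ht, hht⟩ := exists_linearMap_eqOn hP.2.2.2.1 fun _ => 1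
  have key : ∀ n : ℕ, ∀ u ∈ R₀, u ∈ nnspan P₀ → ht u < n → srefl B u ∈ weyl B P₀ := by
    intro n
    induction n with
    | zero =>
      intro u _ hu' hlt
      have := nonneg_of_mem_nnspan ht (fun p hp => by simp [hht p hp]) hu'
      push_cast at hlt
      linarith
    | succ n ih =>
      intro u hu hu' hlt
      obtain ⟨p, hp, ⟨c, hc, rfl⟩ | ⟨hpos, hlt'⟩⟩ := hR.exists_srefl_height_lt hP hht hu hu'
      · rw [srefl_smul B hc]
        exact hgen p hp
      · have hrec := ih _ (hR.mapsTo_srefl (hP.1 hp) hu) hpos (by push_cast at hlt; linarith)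
        rw [← srefl_srefl_apply B p u, srefl_srefl B hR.symm]
        exact mul_mem (mul_mem (hgen p hp) hrec) (hgen p hp)
  obtain ⟨n, hn⟩ := exists_nat_gt (max (ht u) (ht (-u)))
  rcases hP.mem_or_neg_mem hu with hpos | hneg
  · exact key n u hu hpos (lt_of_le_of_lt (le_max_left _ _) hn)
  · rw [← srefl_smul B (neg_ne_zero.2 one_ne_zero) u, neg_one_smul]
    exact key n (-u) (hR.neg_mem hu) hneg (lt_of_le_of_lt (le_max_right _ _) hn)

theorem weyl_le_of_isBaseSet (hR : IsRootSet B R₀) (hP : IsBaseSet R₀ P₀ m) :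
    weyl B R₀ ≤ weyl B P₀ :=
  Submonoid.closure_le.2 <| image_subset_iff.2 fun _ hu => hR.srefl_mem_weyl_of_isBaseSet hP hu

end IsRootSet

section Quotient

variable {V : Type*} [AddCommGroup V] [Module ℝ V] {W : Submodule ℝ V}
  {B : LinearMap.BilinForm ℝ V} {h1 : ∀ w ∈ W, B w = 0} {h2 : ∀ v : V, ∀ w ∈ W, B v w = 0}

theorem quotForm_mkQ (a b : V) : quotForm W B h1 h2 (W.mkQ a) (W.mkQ b) = B a b := rfl

theorem srefl_quotForm_mkQ (v z : V) :
    srefl (quotForm W B h1 h2) (W.mkQ v) (W.mkQ z) = W.mkQ (srefl B v z) := by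
  simp only [srefl_apply, map_sub, map_smul, quotForm_mkQ]

theorem IsRootSet.image_mkQ {R : Set V} (hR : IsRootSet B R) :
    IsRootSet (quotForm W B h1 h2) (W.mkQ '' R) where
  symm x y := by
    obtain ⟨a, rfl⟩ := W.mkQ_surjective x
    obtain ⟨b, rfl⟩ := W.mkQ_surjective y
    exact hR.symm a b
  pos := forall_mem_image.2 hR.pos
  integral := forall_mem_image.2 fun α hα => forall_mem_image.2 (hR.integral α hα)
  reflect := forall_mem_image.2 fun α hα => by
    conv_rhs => rw [← hR.reflect α hα]
    simp only [image_image, srefl_quotForm_mkQ]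

theorem exists_lift_of_mem_weyl {S : Set V} {w : Module.End ℝ (V ⧸ W)}
    (hw : w ∈ weyl (quotForm W B h1 h2) (W.mkQ '' S)) :
    ∃ w' ∈ weyl B S, ∀ z, w (W.mkQ z) = W.mkQ (w' z) := by
  induction hw using Submonoid.closure_induction with
  | mem w hw =>
    obtain ⟨_, ⟨v, hv, rfl⟩, rfl⟩ := hw
    exact ⟨srefl B v, Submonoid.subset_closure (mem_image_of_mem _ hv),
      srefl_quotForm_mkQ v⟩
  | one => exact ⟨1, one_mem _, fun _ => rfl⟩
  | mul a b _ _ ha hb =>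
    obtain ⟨a', ha', hca⟩ := ha
    obtain ⟨b', hb', hcb⟩ := hb
    exact ⟨a' * b', mul_mem ha' hb', fun z => by simp only [Module.End.mul_apply, hcb, hca]⟩

end Quotient

section Affine

variable {V : Type*} [AddCommGroup V] [Module ℝ V] {B : LinearMap.BilinForm ℝ V} {R P : Set V}
  {α₀ : V} {m : ℕ} {W : Submodule ℝ V}

theorem IsBaseSet.apply_eq_one (hP : IsBaseSet R (insert α₀ P) m) {f : V →ₗ[ℝ] ℝ}
    (hfα₀ : f α₀ = 1) (hfP : ∀ p ∈ P, f p = 0) {δ μ : V} (hδ : δ ∈ zspan R)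
    (hμ : μ ∈ AddSubgroup.closure P) {n : ℕ} (hα₀μ : α₀ = (n : ℤ) • δ + μ) : f δ = 1 := by
  obtain ⟨k, hk⟩ := exists_int_eq_of_mem_closure f
    (forall_mem_insert.2 ⟨⟨1, by simp [hfα₀]⟩, fun p hp => ⟨0, by simp [hfP p hp]⟩⟩)
    (hP.zspan_le hδ)
  have hfμ : f μ = 0 :=
    apply_eq_zero_of_mem_span hfP ((AddSubgroup.closure_le (span ℝ P).toAddSubgroup).2
      subset_span hμ)
  have hnk : (n : ℤ) * k = 1 := by
    have : f α₀ = n * k := by rw [hα₀μ, map_add, map_zsmul, hk, hfμ]; simp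
    exact_mod_cast this.symm.trans hfα₀
  rw [Int.eq_one_of_mul_eq_one_right (Int.natCast_nonneg n) hnk, one_mul] at hnk
  simp [hk, hnk]

theorem IsBaseSet.exists_coord_insert (hP : IsBaseSet R (insert α₀ P) m) (hα₀ : α₀ ∉ P) :
    ∃ f : V →ₗ[ℝ] ℝ, f α₀ = 1 ∧ ∀ p ∈ P, f p = 0 := by
  obtain ⟨f, hfα₀, hf⟩ := exists_coord hP.2.2.2.1 (mem_insert α₀ P)
  exact ⟨f, hfα₀, fun p hp => hf p (mem_insert_of_mem _ hp) (ne_of_mem_of_not_mem hp hα₀)⟩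

theorem IsRootSet.ne_add_of_isBaseSet (hR : IsRootSet B R)
    (hP : IsBaseSet R (insert α₀ P) m) (hα₀ : α₀ ∉ P) {δ c : V} (hδ : B α₀ δ = 0)
    (hc : c ∈ nnspan P) : α₀ ≠ δ + c := by
  intro h
  have hc_nonpos : B α₀ c ≤ 0 := by
    have := nonneg_of_mem_nnspan (-B α₀) (fun p hp => ?_) hc
    · simpa using this
    rw [LinearMap.neg_apply, neg_nonneg, hR.symm]
    exact hR.form_nonpos_of_isBaseSet hP (mem_insert _ _) (mem_insert_of_mem _ hp)
      (ne_of_mem_of_not_mem hp hα₀).symm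
  have hα₀α₀ : B α₀ α₀ = B α₀ c :=
    calc B α₀ α₀ = B α₀ (δ + c) := by rw [← h]
      _ = B α₀ c := by rw [map_add, hδ, zero_add]
  exact (hR.pos α₀ (hP.1 (mem_insert _ _))).not_ge (hα₀α₀ ▸ hc_nonpos)

theorem IsRootSet.sub_mem_nnspan_of_mem_weyl (hR : IsRootSet B R)
    (hP : IsBaseSet R (insert α₀ P) m) (hα₀ : α₀ ∉ P) {δ θ : V} (hδ : ∀ p ∈ P, B p δ = 0)
    (hθ : θ ∈ span ℝ P) (hα₀θ : α₀ = δ - θ) {w : Module.End ℝ V} (hw : w ∈ weyl B P) :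
    θ - w θ ∈ nnspan P := by
  have hPR : P ⊆ R := (subset_insert _ _).trans hP.1
  obtain ⟨f, hfα₀, hfP⟩ := hP.exists_coord_insert hα₀
  have hwθ : w θ ∈ span ℝ P := weyl_mapsTo B (fun v hv => srefl_mapsTo_span B hv) hw hθ
  have hwδ : w δ = δ :=
    weyl_mapsTo B (T := {δ}) (fun v hv => by simp [srefl_apply_of_orthogonal B (hδ v hv)]) hw rfl
  have hwα₀ : w α₀ = α₀ + (θ - w θ) := by
    rw [hα₀θ, map_sub, hwδ]
    abel
  have hwα₀R : w α₀ ∈ R :=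
    weyl_mapsTo B (fun v hv => hR.mapsTo_srefl (hPR hv)) hw (hP.1 (mem_insert _ _))
  have hfwα₀ : f (w α₀) = 1 := by
    rw [hwα₀, map_add, apply_eq_zero_of_mem_span hfP (sub_mem hθ hwθ), hfα₀, add_zero]
  obtain ⟨n, c, hc, hwn⟩ := mem_nnspan_insert <| hP.mem_nnspan_of_pos (f := f)
    (forall_mem_insert.2 ⟨hfα₀.ge.trans' zero_le_one, fun p hp => (hfP p hp).ge⟩) hwα₀R
    (hfwα₀ ▸ one_pos)
  have hfc : f c = 0 := apply_eq_zero_of_mem_span hfP (Submodule.closure_subset_span hc)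
  have hn : (n : ℝ) = 1 := by
    have := congrArg f hwn
    rwa [hfwα₀, map_add, map_nsmul, hfc, hfα₀, nsmul_eq_mul, mul_one, add_zero, eq_comm] at this
  rw [show n = 1 by exact_mod_cast hn, one_smul, hwα₀] at hwn
  rwa [add_left_cancel hwn]

theorem eq_smul_add_of_mkQ_eq {δ : V}
    (hδ : (AddSubgroup.closure {δ} : Set V) = (zspan R : Set V) ∩ W) {f : V →ₗ[ℝ] ℝ}
    (hfδ : f δ = 1) {x y : V} (hx : x ∈ zspan R) (hy : y ∈ zspan R)
    (hxy : W.mkQ x = W.mkQ y) : x = (f x - f y) • δ + y := by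
  have hmem : x - y ∈ (AddSubgroup.closure {δ} : Set V) :=
    hδ ▸ ⟨sub_mem hx hy, (Submodule.Quotient.eq W).1 hxy⟩
  obtain ⟨k, hk⟩ := AddSubgroup.mem_closure_singleton.1 hmem
  have hfk : f x - f y = k := by
    rw [← map_sub, ← hk, map_zsmul, hfδ, zsmul_eq_mul, mul_one]
  rw [hfk, Int.cast_smul_eq_zsmul, hk, sub_add_cancel]

theorem IsRootSet.mkQ_mem_thetaSet {h1 : ∀ w ∈ W, B w = 0}
    {h2 : ∀ v : V, ∀ w ∈ W, B v w = 0} (hR : IsRootSet B R)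
    (hP : IsBaseSet R (insert α₀ P) m) (hα₀ : α₀ ∉ P) {l : ℕ}
    (hPW : IsBaseSet (W.mkQ '' R) (W.mkQ '' P) l) {δ θ : V} (hδW : δ ∈ W) (hθ : θ ∈ span ℝ P)
    (hα₀θ : α₀ = δ - θ) :
    W.mkQ θ ∈ thetaSet (quotForm W B h1 h2) (W.mkQ '' R) (W.mkQ '' P) := by
  have hθR : W.mkQ θ ∈ W.mkQ '' R := by
    refine ⟨-α₀, hR.neg_mem (hP.1 (mem_insert _ _)), (Submodule.Quotient.eq W).2 ?_⟩
    convert W.neg_mem hδW using 1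
    rw [hα₀θ]
    abel
  refine ⟨_, hθR, ⟨1, one_mem _, rfl⟩, ?_⟩
  rintro _ ⟨w, hw, rfl⟩
  obtain ⟨w', hw', hlift⟩ := exists_lift_of_mem_weyl (hR.image_mkQ.weyl_le_of_isBaseSet hPW hw)
  refine ⟨W.mkQ (θ - w' θ), ?_, by rw [hlift, map_sub, sub_sub_cancel]⟩
  rw [nnspan_image]
  exact mem_image_of_mem _
    (hR.sub_mem_nnspan_of_mem_weyl hP hα₀ (fun p _ => h2 p δ hδW) hθ hα₀θ hw')

end Affine

/-- The distinguished root `α₀` of an affine root system satisfies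
`α₀ = δ′ − θ` with `θ ∈ ℕΠ′`, `θ ≠ 0` and `π(θ) ∈ Θ(π(R), π(Π′))`. -/
theorem stmt3 {V : Type*} [AddCommGroup V] [Module ℝ V]
    (B : LinearMap.BilinForm ℝ V) (R : Set V) (l : ℕ)
    (hE : IsEARS B R l 1)
    (δ' : V)
    (hδgen : (AddSubgroup.closure {δ'} : Set V) = (zspan R : Set V) ∩ nullSet B)
    (P' : Set V) (hP'R : P' ⊆ R) (hP'card : P'.ncard = l)
    (hP'base : IsBaseSet ((LinearMap.ker B).mkQ '' R) ((LinearMap.ker B).mkQ '' P') l)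
    (α₀ : V) (hα₀R : α₀ ∈ R) (hα₀base : IsBaseSet R (insert α₀ P') (l + 1))
    (hα₀pos : ∃ m : ℕ, 0 < m ∧ ∃ μ ∈ AddSubgroup.closure P', α₀ = (m : ℤ) • δ' + μ) :
    ∃ θ : V, θ ∈ nnspan P' ∧ θ ≠ 0 ∧ α₀ = δ' - θ ∧
      (LinearMap.ker B).mkQ θ ∈
        thetaSet
          (quotForm (LinearMap.ker B) B
            (fun w hw => LinearMap.mem_ker.mp hw)
            (fun v w hw => by rw [hE.symm v w, LinearMap.mem_ker.mp hw]; simp))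
          ((LinearMap.ker B).mkQ '' R) ((LinearMap.ker B).mkQ '' P') := by
  have hR := hE.isRootSet
  rw [hE.null_eq] at hδgen
  obtain ⟨hδR, hδker⟩ : δ' ∈ (zspan R : Set V) ∩ LinearMap.ker B :=
    hδgen ▸ AddSubgroup.subset_closure rfl
  have hα₀P' : α₀ ∉ P' := fun h => by
    have := hα₀base.2.2.1
    rw [insert_eq_of_mem h, hP'card] at this
    omega
  obtain ⟨f, hfα₀, hfP'⟩ := hα₀base.exists_coord_insert hα₀P'
  obtain ⟨m, -, μ, hμ, hα₀μ⟩ := hα₀pos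
  have hfδ : f δ' = 1 := hα₀base.apply_eq_one hfα₀ hfP' hδR hμ hα₀μ
  obtain ⟨θ, hθ, hθα₀⟩ := hP'base.exists_nnspan_apply_eq _ hα₀R
  have hθR : θ ∈ zspan R := AddSubgroup.closure_mono hP'R (nnspan_subset_closure P' hθ)
  have hfθ : f θ = 0 := apply_eq_zero_of_mem_span hfP' (Submodule.closure_subset_span hθ)
  rcases hθα₀ with hθα₀ | hθα₀
  · have := eq_smul_add_of_mkQ_eq hδgen hfδ (AddSubgroup.subset_closure hα₀R) hθR hθα₀
    rw [hfα₀, hfθ, sub_zero, one_smul] at this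
    refine absurd this (hR.ne_add_of_isBaseSet hα₀base hα₀P' ?_ hθ)
    rw [hE.symm, LinearMap.mem_ker.1 hδker, LinearMap.zero_apply]
  · have :=
      eq_smul_add_of_mkQ_eq hδgen hfδ (AddSubgroup.subset_closure hα₀R) (neg_mem hθR) hθα₀
    rw [hfα₀, map_neg, hfθ, neg_zero, sub_zero, one_smul, ← sub_eq_add_neg] at this
    refine ⟨θ, hθ, ?_, this, hR.mkQ_mem_thetaSet hα₀base hα₀P' hP'base hδker
      (Submodule.closure_subset_span hθ) this⟩
    rintro rfl
    rw [sub_zero] at this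
    exact (hR.pos α₀ hα₀R).ne' (by rw [this, LinearMap.mem_ker.1 hδker]; rfl)
end
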